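/- arXiv:1605.09030 — 2 statements merged into one kernel-verified Lean document; each statement's English description precedes it below -/
import Mathlib

section
/- Correctness of the destination-point formula: let φ₁ ∈ (−π/2, π/2) be a latitude, λ₁ ∈ ℝ a longitude, θ ∈ ℝ a bearing angle, and δ ∈ ℝ an angular distance. Define s₂ = sin φ₁ · cos δ + cos φ₁ · sin δ · cos θ and φ₂ = arcsin s₂, and assume cos φ₂ > 0. Define λ₂ = λ₁ + arg(x + i·y), where x = cos δ − sin φ₁ · s₂, y = sin θ · sin δ · cos φ₁, and arg denotes the principal argument of a nonzero complex number (equivalently atan2(y, x)). Then sin φ₁ · sin φ₂ + cos φ₁ · cos φ₂ · cos(λ₂ − λ₁) = cos δ; equivalently, the angular distance between v(φ₁,λ₁) and v(φ₂,λ₂) on the unit sphere has cosine equal to cos δ. -/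
open Real
open scoped RealInnerProductSpace

/-- The point on the unit sphere in ℝ³ with latitude φ and longitude λ. -/
noncomputable def sphPoint (φ lam : ℝ) : EuclideanSpace ℝ (Fin 3) :=
  WithLp.toLp 2 ![Real.cos φ * Real.cos lam, Real.cos φ * Real.sin lam, Real.sin φ]

/-!
Write `s = sin φ₁ cos δ + cos φ₁ sin δ cos θ`. The identity
`1 - s² = (sin φ₁ sin δ cos θ - cos φ₁ cos δ)² + (sin δ sin θ)²` shows `|s| ≤ 1`, so
`sin φ₂ = s` and `cos φ₂ = √(1 - s²)`. For `z = x + i y` with `x = cos δ - sin φ₁ s` and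
`y = sin θ sin δ cos φ₁`, the identity `x² + y² = cos² φ₁ (1 - s²)` gives `‖z‖ = cos φ₁ cos φ₂`,
hence `cos φ₁ cos φ₂ cos (arg z) = Re z = cos δ - sin φ₁ sin φ₂`, which is the claim.
-/

lemma inner_sphPoint (φ₁ lam₁ φ₂ lam₂ : ℝ) :
    ⟪sphPoint φ₁ lam₁, sphPoint φ₂ lam₂⟫
      = sin φ₁ * sin φ₂ + cos φ₁ * cos φ₂ * cos (lam₂ - lam₁) := by
  simp only [sphPoint, PiLp.inner_apply, RCLike.inner_apply, conj_trivial,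
    Fin.sum_univ_three, Matrix.cons_val_zero, Matrix.cons_val_one, Matrix.cons_val_two,
    Matrix.head_cons, Matrix.tail_cons]
  rw [cos_sub]
  ring

section Destination

variable {φ δ θ s : ℝ}

lemma one_sub_sq_destination_sin
    (hs : s = sin φ * cos δ + cos φ * sin δ * cos θ) :
    1 - s ^ 2 = (sin φ * sin δ * cos θ - cos φ * cos δ) ^ 2 + (sin δ * sin θ) ^ 2 := by
  subst hs
  linear_combination (-(sin δ ^ 2 * cos θ ^ 2 + cos δ ^ 2)) * sin_sq_add_cos_sq φ
    - sin δ ^ 2 * sin_sq_add_cos_sq θ - sin_sq_add_cos_sq δ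

lemma abs_destination_sin_le_one
    (hs : s = sin φ * cos δ + cos φ * sin δ * cos θ) : |s| ≤ 1 := by
  rw [← sq_le_one_iff_abs_le_one]
  nlinarith [one_sub_sq_destination_sin hs, sq_nonneg (sin φ * sin δ * cos θ - cos φ * cos δ),
    sq_nonneg (sin δ * sin θ)]

lemma destination_offset_sq_add_sq
    (hs : s = sin φ * cos δ + cos φ * sin δ * cos θ) :
    (cos δ - sin φ * s) ^ 2 + (sin θ * sin δ * cos φ) ^ 2 = cos φ ^ 2 * (1 - s ^ 2) := by
  subst hs
  linear_combination
    ((sin φ * cos δ + cos φ * sin δ * cos θ) ^ 2 - cos δ ^ 2) * sin_sq_add_cos_sq φ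
      + cos φ ^ 2 * sin δ ^ 2 * sin_sq_add_cos_sq θ + cos φ ^ 2 * sin_sq_add_cos_sq δ

lemma norm_destination_offset (hφ : 0 ≤ cos φ)
    (hs : s = sin φ * cos δ + cos φ * sin δ * cos θ) :
    ‖((cos δ - sin φ * s : ℝ) : ℂ) + ((sin θ * sin δ * cos φ : ℝ) : ℂ) * Complex.I‖
      = cos φ * cos (arcsin s) := by
  rw [Complex.norm_add_mul_I, destination_offset_sq_add_sq hs, cos_arcsin,
    sqrt_mul (sq_nonneg _), sqrt_sq hφ]

end Destination

theorem destination_point_formula_general (φ₁ lam₁ θ δ : ℝ)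
    (hφ₁ : φ₁ ∈ Set.Ioo (-(π / 2)) (π / 2))
    (s₂ : ℝ)
    (hs₂ : s₂ = Real.sin φ₁ * Real.cos δ + Real.cos φ₁ * Real.sin δ * Real.cos θ)
    (φ₂ : ℝ) (hφ₂ : φ₂ = Real.arcsin s₂)
    (lam₂ : ℝ)
    (hlam₂ : lam₂ = lam₁ + Complex.arg
        (((Real.cos δ - Real.sin φ₁ * s₂ : ℝ) : ℂ)
          + ((Real.sin θ * Real.sin δ * Real.cos φ₁ : ℝ) : ℂ) * Complex.I)) :
    Real.sin φ₁ * Real.sin φ₂ + Real.cos φ₁ * Real.cos φ₂ * Real.cos (lam₂ - lam₁)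
        = Real.cos δ ∧
      Real.cos (Real.arccos ⟪sphPoint φ₁ lam₁, sphPoint φ₂ lam₂⟫) = Real.cos δ := by
  obtain ⟨hs_lo, hs_hi⟩ := abs_le.mp (abs_destination_sin_le_one hs₂)
  have hsin : sin φ₂ = s₂ := hφ₂ ▸ sin_arcsin hs_lo hs_hi
  have hcos : cos φ₁ * cos φ₂ * cos (lam₂ - lam₁) = cos δ - sin φ₁ * s₂ := by
    rw [hlam₂, add_sub_cancel_left, hφ₂,
      ← norm_destination_offset (cos_pos_of_mem_Ioo hφ₁).le hs₂, Complex.norm_mul_cos_arg]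
    simp only [Complex.add_re, Complex.ofReal_re, Complex.re_ofReal_mul, Complex.I_re, mul_zero,
      add_zero]
  have hdot : sin φ₁ * sin φ₂ + cos φ₁ * cos φ₂ * cos (lam₂ - lam₁) = cos δ := by
    rw [hsin, hcos]
    ring
  refine ⟨hdot, ?_⟩
  rw [inner_sphPoint, hdot, cos_arccos (neg_one_le_cos δ) (cos_le_one δ)]

theorem destination_point_formula (φ₁ lam₁ θ δ : ℝ)
    (hφ₁ : φ₁ ∈ Set.Ioo (-(π / 2)) (π / 2))
    (s₂ : ℝ)
    (hs₂ : s₂ = Real.sin φ₁ * Real.cos δ + Real.cos φ₁ * Real.sin δ * Real.cos θ)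
    (φ₂ : ℝ) (hφ₂ : φ₂ = Real.arcsin s₂)
    (hcosφ₂ : 0 < Real.cos φ₂)
    (lam₂ : ℝ)
    (hlam₂ : lam₂ = lam₁ + Complex.arg
        (((Real.cos δ - Real.sin φ₁ * s₂ : ℝ) : ℂ)
          + ((Real.sin θ * Real.sin δ * Real.cos φ₁ : ℝ) : ℂ) * Complex.I)) :
    Real.sin φ₁ * Real.sin φ₂ + Real.cos φ₁ * Real.cos φ₂ * Real.cos (lam₂ - lam₁)
        = Real.cos δ ∧
      Real.cos (Real.arccos ⟪sphPoint φ₁ lam₁, sphPoint φ₂ lam₂⟫) = Real.cos δ :=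
  destination_point_formula_general φ₁ lam₁ θ δ hφ₁ s₂ hs₂ φ₂ hφ₂ lam₂ hlam₂
end

section
/- The bearing formula inverts the destination-point formula: let φ₁ ∈ (−π/2, π/2), λ₁ ∈ ℝ, let δ ∈ (0, π) and θ ∈ (−π, π]. Define s₂ = sin φ₁ · cos δ + cos φ₁ · sin δ · cos θ, φ₂ = arcsin s₂, assume cos φ₂ > 0, and define λ₂ = λ₁ + arg((cos δ − sin φ₁ · s₂) + i · sin θ · sin δ · cos φ₁). Set ȳ = sin(λ₂ − λ₁) · cos φ₂ and x̄ = cos φ₁ · sin φ₂ − sin φ₁ · cos φ₂ · cos(λ₂ − λ₁). Then (x̄, ȳ) = (sin δ · cos θ, sin δ · sin θ), and consequently arg(x̄ + i·ȳ) = θ, where arg denotes the principal argument of a nonzero complex number (equivalently atan2(ȳ, x̄)). -/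
open Real

/-! With `s = sin φ₂` and `z` the point whose argument is `λ₂ - λ₁`, the identities
`1 - s² = (sin φ₁ sin δ - cos φ₁ cos δ cos θ)² + (cos φ₁ sin θ)²` and `|z|² = cos² φ₁ (1 - s²)`
give `|s| ≤ 1` and `|z| = cos φ₁ cos φ₂`. Multiplied by `cos φ₁`, the bearing components then
contain `|z| cos (arg z)` and `|z| sin (arg z)`, i.e. `re z` and `im z`, and reduce to polynomial
identities in the sines and cosines. As `sin δ > 0`, `arg (sin δ (cos θ + i sin θ)) = θ`. -/

/-- `sin φ₂` for the point at angular distance `δ` and bearing `θ` from latitude `φ₁`. -/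
noncomputable def destSinLat (φ₁ δ θ : ℝ) : ℝ :=
  sin φ₁ * cos δ + cos φ₁ * sin δ * cos θ

/-- The point `x + i y` of the formula `λ₂ = λ₁ + atan2 (y, x)`. -/
noncomputable def destLonVec (φ₁ δ θ : ℝ) : ℂ :=
  ((cos δ - sin φ₁ * destSinLat φ₁ δ θ : ℝ) : ℂ) + ((sin θ * sin δ * cos φ₁ : ℝ) : ℂ) * Complex.I

/-- The pair `(x, y)` of the bearing `atan2 (y, x)` from `(φ₁, λ₁)` to `(φ₂, λ₁ + Δlam)`. -/
noncomputable def bearingVec (φ₁ φ₂ Δlam : ℝ) : ℝ × ℝ :=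
  (cos φ₁ * sin φ₂ - sin φ₁ * cos φ₂ * cos Δlam, sin Δlam * cos φ₂)

lemma one_sub_destSinLat_sq (φ₁ δ θ : ℝ) :
    1 - destSinLat φ₁ δ θ ^ 2
      = (sin φ₁ * sin δ - cos φ₁ * cos δ * cos θ) ^ 2 + (cos φ₁ * sin θ) ^ 2 := by
  unfold destSinLat
  linear_combination (-(cos φ₁ ^ 2 * cos θ ^ 2) - sin φ₁ ^ 2) * cos_sq_add_sin_sq δ
    - cos φ₁ ^ 2 * cos_sq_add_sin_sq θ - cos_sq_add_sin_sq φ₁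

lemma destSinLat_mem_Icc (φ₁ δ θ : ℝ) : destSinLat φ₁ δ θ ∈ Set.Icc (-1) 1 := by
  have hsq : destSinLat φ₁ δ θ ^ 2 ≤ 1 := by
    nlinarith [one_sub_destSinLat_sq φ₁ δ θ,
      sq_nonneg (sin φ₁ * sin δ - cos φ₁ * cos δ * cos θ), sq_nonneg (cos φ₁ * sin θ)]
  exact abs_le.mp ((sq_le_one_iff_abs_le_one _).mp hsq)

lemma normSq_destLonVec (φ₁ δ θ : ℝ) :
    Complex.normSq (destLonVec φ₁ δ θ) = cos φ₁ ^ 2 * (1 - destSinLat φ₁ δ θ ^ 2) := by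
  simp only [destLonVec, Complex.normSq_add_mul_I, destSinLat]
  linear_combination
    ((sin φ₁ * cos δ + cos φ₁ * sin δ * cos θ) ^ 2 - cos δ ^ 2) * sin_sq_add_cos_sq φ₁
      + cos φ₁ ^ 2 * cos_sq_add_sin_sq δ + cos φ₁ ^ 2 * sin δ ^ 2 * cos_sq_add_sin_sq θ

lemma norm_destLonVec {φ₁ : ℝ} (hφ₁ : 0 ≤ cos φ₁) (δ θ : ℝ) :
    ‖destLonVec φ₁ δ θ‖ = cos φ₁ * cos (arcsin (destSinLat φ₁ δ θ)) := by
  rw [Complex.norm_def, normSq_destLonVec, cos_arcsin, sqrt_mul (sq_nonneg _), sqrt_sq hφ₁]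

section Destination

variable {φ₁ : ℝ} (hφ₁ : 0 < cos φ₁) (δ θ : ℝ)
include hφ₁

lemma bearingVec_destination_fst :
    (bearingVec φ₁ (arcsin (destSinLat φ₁ δ θ)) (Complex.arg (destLonVec φ₁ δ θ))).1
      = sin δ * cos θ := by
  obtain ⟨hs_lo, hs_hi⟩ := destSinLat_mem_Icc φ₁ δ θ
  apply mul_left_cancel₀ hφ₁.ne'
  calc cos φ₁ * (cos φ₁ * sin (arcsin (destSinLat φ₁ δ θ))
        - sin φ₁ * cos (arcsin (destSinLat φ₁ δ θ)) * cos (Complex.arg (destLonVec φ₁ δ θ)))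
      = cos φ₁ ^ 2 * destSinLat φ₁ δ θ
          - sin φ₁ * (‖destLonVec φ₁ δ θ‖ * cos (Complex.arg (destLonVec φ₁ δ θ))) := by
        rw [norm_destLonVec hφ₁.le, sin_arcsin hs_lo hs_hi]; ring
    _ = cos φ₁ ^ 2 * destSinLat φ₁ δ θ - sin φ₁ * (destLonVec φ₁ δ θ).re := by
        rw [Complex.norm_mul_cos_arg]
    _ = cos φ₁ * (sin δ * cos θ) := by
        simp only [destLonVec, Complex.add_re, Complex.ofReal_re, Complex.mul_re, Complex.I_re,
          Complex.I_im, Complex.ofReal_im]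
        unfold destSinLat
        linear_combination (sin φ₁ * cos δ + cos φ₁ * sin δ * cos θ) * cos_sq_add_sin_sq φ₁

lemma bearingVec_destination_snd :
    (bearingVec φ₁ (arcsin (destSinLat φ₁ δ θ)) (Complex.arg (destLonVec φ₁ δ θ))).2
      = sin δ * sin θ := by
  apply mul_left_cancel₀ hφ₁.ne'
  calc cos φ₁ * (sin (Complex.arg (destLonVec φ₁ δ θ)) * cos (arcsin (destSinLat φ₁ δ θ)))
      = ‖destLonVec φ₁ δ θ‖ * sin (Complex.arg (destLonVec φ₁ δ θ)) := by
        rw [norm_destLonVec hφ₁.le]; ring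
    _ = (destLonVec φ₁ δ θ).im := Complex.norm_mul_sin_arg _
    _ = cos φ₁ * (sin δ * sin θ) := by
        simp only [destLonVec, Complex.add_im, Complex.ofReal_im, Complex.mul_im,
          Complex.ofReal_re, Complex.I_re, Complex.I_im]
        ring

lemma bearingVec_destination :
    bearingVec φ₁ (arcsin (destSinLat φ₁ δ θ)) (Complex.arg (destLonVec φ₁ δ θ))
      = (sin δ * cos θ, sin δ * sin θ) :=
  Prod.ext (bearingVec_destination_fst hφ₁ δ θ) (bearingVec_destination_snd hφ₁ δ θ)

end Destination

lemma arg_ofReal_mul_cos_add_ofReal_mul_sin_mul_I {r : ℝ} (hr : 0 < r) {θ : ℝ}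
    (hθ : θ ∈ Set.Ioc (-π) π) :
    Complex.arg (((r * cos θ : ℝ) : ℂ) + ((r * sin θ : ℝ) : ℂ) * Complex.I) = θ := by
  convert Complex.arg_mul_cos_add_sin_mul_I hr hθ using 2
  push_cast
  ring

theorem bearing_inverts_destination_general (φ₁ lam₁ δ θ : ℝ)
    (hφ₁ : φ₁ ∈ Set.Ioo (-(π / 2)) (π / 2))
    (hδ : δ ∈ Set.Ioo 0 π)
    (hθ : θ ∈ Set.Ioc (-π) π)
    (s₂ : ℝ)
    (hs₂ : s₂ = Real.sin φ₁ * Real.cos δ + Real.cos φ₁ * Real.sin δ * Real.cos θ)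
    (φ₂ : ℝ) (hφ₂ : φ₂ = Real.arcsin s₂)
    (lam₂ : ℝ)
    (hlam₂ : lam₂ = lam₁ + Complex.arg
        (((Real.cos δ - Real.sin φ₁ * s₂ : ℝ) : ℂ)
          + ((Real.sin θ * Real.sin δ * Real.cos φ₁ : ℝ) : ℂ) * Complex.I))
    (ybar xbar : ℝ)
    (hybar : ybar = Real.sin (lam₂ - lam₁) * Real.cos φ₂)
    (hxbar : xbar = Real.cos φ₁ * Real.sin φ₂
        - Real.sin φ₁ * Real.cos φ₂ * Real.cos (lam₂ - lam₁)) :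
    (xbar, ybar) = (Real.sin δ * Real.cos θ, Real.sin δ * Real.sin θ) ∧
      Complex.arg ((xbar : ℂ) + (ybar : ℂ) * Complex.I) = θ := by
  have hΔlam : lam₂ - lam₁ = Complex.arg (destLonVec φ₁ δ θ) := by
    rw [hlam₂, hs₂, add_sub_cancel_left]; rfl
  have hvec : (xbar, ybar) = (sin δ * cos θ, sin δ * sin θ) := by
    rw [hxbar, hybar, hΔlam, hφ₂, hs₂]
    exact bearingVec_destination (cos_pos_of_mem_Ioo hφ₁) δ θ
  obtain ⟨rfl, rfl⟩ := Prod.mk.inj hvec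
  exact ⟨rfl, arg_ofReal_mul_cos_add_ofReal_mul_sin_mul_I (sin_pos_of_pos_of_lt_pi hδ.1 hδ.2) hθ⟩

theorem bearing_inverts_destination (φ₁ lam₁ δ θ : ℝ)
    (hφ₁ : φ₁ ∈ Set.Ioo (-(π / 2)) (π / 2))
    (hδ : δ ∈ Set.Ioo 0 π)
    (hθ : θ ∈ Set.Ioc (-π) π)
    (s₂ : ℝ)
    (hs₂ : s₂ = Real.sin φ₁ * Real.cos δ + Real.cos φ₁ * Real.sin δ * Real.cos θ)
    (φ₂ : ℝ) (hφ₂ : φ₂ = Real.arcsin s₂)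
    (hcosφ₂ : 0 < Real.cos φ₂)
    (lam₂ : ℝ)
    (hlam₂ : lam₂ = lam₁ + Complex.arg
        (((Real.cos δ - Real.sin φ₁ * s₂ : ℝ) : ℂ)
          + ((Real.sin θ * Real.sin δ * Real.cos φ₁ : ℝ) : ℂ) * Complex.I))
    (ybar xbar : ℝ)
    (hybar : ybar = Real.sin (lam₂ - lam₁) * Real.cos φ₂)
    (hxbar : xbar = Real.cos φ₁ * Real.sin φ₂
        - Real.sin φ₁ * Real.cos φ₂ * Real.cos (lam₂ - lam₁)) :
    (xbar, ybar) = (Real.sin δ * Real.cos θ, Real.sin δ * Real.sin θ) ∧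
      Complex.arg ((xbar : ℂ) + (ybar : ℂ) * Complex.I) = θ :=
  bearing_inverts_destination_general φ₁ lam₁ δ θ hφ₁ hδ hθ s₂ hs₂ φ₂ hφ₂ lam₂ hlam₂ ybar xbar hybar
    hxbar
end
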